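/- Let λ ∈ ℂ with Re λ ≥ 0, and let a_n(λ) be the d = 3 sequence defined by a_{−1} = 0, a_0 = 1, a_{n+2} = A_n(λ)·a_{n+1} + B_n(λ)·a_n with A_n(λ) = (12n² + (8λ+56)n + λ² + 20λ + 56)/(8n² + 52n + 72) and B_n(λ) = −(4n² + (4λ+12)n + λ² + 6λ + 8)/(8n² + 52n + 72). Then there exists N such that a_n(λ) ≠ 0 for all n ≥ N, and r_n(λ) = a_{n+1}(λ)/a_n(λ) converges as n → ∞ either to 1 or to 1/2. -/

import Mathlib

/-
Diagonalise the limiting recurrence `a (n + 2) = (1 + ν) a (n + 1) - ν a n` (here `ν = 1/2`):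
with `x n = a (n + 1) - ν a n` and `y n = a (n + 1) - a n`, the actual recurrence becomes
`x (n + 1) ≈ x n`, `y (n + 1) ≈ ν y n`, with errors `o(‖x n‖ + ‖y n‖)` because `A n → 3/2` and
`B n → -1/2`. If `‖y n‖ ≤ ‖x n‖` happens once late enough, this cone is invariant and
`‖y/x‖` contracts by `‖ν‖` at each step, so `y/x → 0` and `a (n + 1)/a n → 1`; otherwise
`‖x‖ < ‖y‖` eventually and `‖x/y‖` contracts backwards in time, so `x/y → 0` and the ratio
tends to `ν`. Since `Re λ ≥ 0` makes every `B n` nonzero, `a n` and `a (n + 1)` never vanish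
together, which rules out `x n = y n = 0`.
-/

open Filter Topology

/-- The `d = 3` recurrence coefficient `A_n(λ)`. -/
noncomputable def A3 (lam : ℂ) (n : ℤ) : ℂ :=
  (12 * (n : ℂ) ^ 2 + (8 * lam + 56) * (n : ℂ) + lam ^ 2 + 20 * lam + 56)
    / (8 * (n : ℂ) ^ 2 + 52 * (n : ℂ) + 72)

/-- The `d = 3` recurrence coefficient `B_n(λ)`. -/
noncomputable def B3 (lam : ℂ) (n : ℤ) : ℂ :=
  -(4 * (n : ℂ) ^ 2 + (4 * lam + 12) * (n : ℂ) + lam ^ 2 + 6 * lam + 8)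
    / (8 * (n : ℂ) ^ 2 + 52 * (n : ℂ) + 72)

lemma Real.tendsto_zero_of_forall_eventually_le {α : Type*} {l : Filter α} {q : α → ℝ}
    (hq : ∀ n, 0 ≤ q n) (h : ∀ δ > 0, ∀ᶠ n in l, q n ≤ δ) : Tendsto q l (𝓝 0) :=
  tendsto_order.2 ⟨fun _ ha => Eventually.of_forall fun n => ha.trans_le (hq n),
    fun δ hδ => (h (δ / 2) (by positivity)).mono fun _ hn => hn.trans_lt (by linarith)⟩

lemma tendsto_zero_of_succ_le_mul_add {q η : ℕ → ℝ} {c : ℝ} (hc0 : 0 ≤ c) (hc1 : c < 1)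
    (hq : ∀ n, 0 ≤ q n) (hη : Tendsto η atTop (𝓝 0))
    (hrec : ∀ᶠ n in atTop, q (n + 1) ≤ c * q n + η n) : Tendsto q atTop (𝓝 0) := by
  refine Real.tendsto_zero_of_forall_eventually_le hq fun δ hδ => ?_
  have hη' : ∀ᶠ n in atTop, η n ≤ (1 - c) * (δ / 2) :=
    hη.eventually (ge_mem_nhds (by nlinarith))
  obtain ⟨N, hN⟩ := eventually_atTop.1 (hrec.and hη')
  have hgeom (k : ℕ) : q (N + k) - δ / 2 ≤ c ^ k * (q N - δ / 2) :=
    le_geom (u := fun k => q (N + k) - δ / 2) hc0 k fun k _ => by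
      have := hN (N + k) (by omega)
      simp only [← add_assoc]
      nlinarith
  have hpow : Tendsto (fun k => c ^ k * (q N - δ / 2)) atTop (𝓝 0) := by
    simpa using (tendsto_pow_atTop_nhds_zero_of_lt_one hc0 hc1).mul_const (q N - δ / 2)
  obtain ⟨K, hK⟩ := eventually_atTop.1 (hpow.eventually (ge_mem_nhds (half_pos hδ)))
  refine eventually_atTop.2 ⟨N + K, fun n hn => ?_⟩
  obtain ⟨k, rfl⟩ := Nat.exists_eq_add_of_le (le_of_add_le_left hn)
  linarith [hgeom k, hK k (by omega)]

lemma tendsto_zero_of_le_mul_succ_add {r η : ℕ → ℝ} {c M : ℝ} (hc0 : 0 ≤ c) (hc1 : c < 1)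
    (hr : ∀ n, 0 ≤ r n) (hM : ∀ᶠ n in atTop, r n ≤ M) (hη : Tendsto η atTop (𝓝 0))
    (hrec : ∀ᶠ n in atTop, r n ≤ c * r (n + 1) + η n) : Tendsto r atTop (𝓝 0) := by
  refine Real.tendsto_zero_of_forall_eventually_le hr fun δ hδ => ?_
  have hη' : ∀ᶠ n in atTop, η n ≤ (1 - c) * δ := hη.eventually (ge_mem_nhds (by nlinarith))
  obtain ⟨N, hN⟩ := eventually_atTop.1 (hrec.and (hη'.and hM))
  refine eventually_atTop.2 ⟨N, fun n hn => ?_⟩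
  have hgeom (k : ℕ) : r n - δ ≤ c ^ k * (M - δ) := by
    suffices r n - δ ≤ c ^ k * (r (n + k) - δ) from
      this.trans (by gcongr; linarith [(hN (n + k) (by omega)).2.2])
    induction k with
    | zero => simp
    | succ k ih =>
      have := hN (n + k) (by omega)
      calc r n - δ ≤ c ^ k * (r (n + k) - δ) := ih
        _ ≤ c ^ k * (c * (r (n + k + 1) - δ)) := by gcongr; nlinarith
        _ = c ^ (k + 1) * (r (n + (k + 1)) - δ) := by ring_nf
  have hpow : Tendsto (fun k => c ^ k * (M - δ)) atTop (𝓝 0) := by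
    simpa using (tendsto_pow_atTop_nhds_zero_of_lt_one hc0 hc1).mul_const (M - δ)
  linarith [ge_of_tendsto' hpow hgeom]

lemma div_le_mul_div_add_of_le {u v u' v' ρ ε : ℝ} (hu' : u - ε * (u + v) ≤ u')
    (hv' : v' ≤ ρ * v + ε * (u + v)) (hρ0 : 0 ≤ ρ) (hρ1 : ρ ≤ 1) (hε0 : 0 ≤ ε) (hε : ε ≤ 1 / 4)
    (hv : 0 ≤ v) (hvu : v ≤ u) (hu : 0 < u) : 0 < u' ∧ v' / u' ≤ ρ * (v / u) + 8 * ε := by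
  have hq0 : 0 ≤ v / u := div_nonneg hv hu.le
  have hq1 : v / u ≤ 1 := (div_le_one hu).2 hvu
  have hv_eq : v = v / u * u := (div_mul_cancel₀ v hu.ne').symm
  have hu'_ge : (1 - 2 * ε) * u ≤ u' := by nlinarith
  have hu'_pos : 0 < u' := lt_of_lt_of_le (by nlinarith) hu'_ge
  refine ⟨hu'_pos, (div_le_iff₀ hu'_pos).2 ?_⟩
  have hρq : ρ * (v / u) ≤ 1 := mul_le_one₀ hρ1 hq0 hq1
  calc v' ≤ (ρ * (v / u) + 2 * ε) * u := by nlinarith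
    _ ≤ (ρ * (v / u) + 8 * ε) * ((1 - 2 * ε) * u) := by nlinarith [mul_nonneg hε0 hu.le]
    _ ≤ (ρ * (v / u) + 8 * ε) * u' := by gcongr

lemma div_le_mul_div_add_of_lt {u v u' v' ρ ε : ℝ} (hu' : u - ε * (u + v) ≤ u')
    (hv' : v' ≤ ρ * v + ε * (u + v)) (hε0 : 0 ≤ ε) (hu : 0 ≤ u) (huv : u < v)
    (hu'0 : 0 ≤ u') (hv'0 : 0 < v') : u / v ≤ (ρ + 2 * ε) * (u' / v') + 2 * ε := by
  have hv : 0 < v := hu.trans_lt huv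
  have hu'_eq : u' = u' / v' * v' := (div_mul_cancel₀ u' hv'0.ne').symm
  have hr' : 0 ≤ u' / v' := div_nonneg hu'0 hv'0.le
  rw [div_le_iff₀ hv]
  calc u ≤ u' + 2 * ε * v := by nlinarith
    _ = u' / v' * v' + 2 * ε * v := by rw [← hu'_eq]
    _ ≤ u' / v' * ((ρ + 2 * ε) * v) + 2 * ε * v := by gcongr; nlinarith
    _ = ((ρ + 2 * ε) * (u' / v') + 2 * ε) * v := by ring

lemma norm_bounds_of_norm_sub_le {𝕜 : Type*} [NormedField 𝕜] {x x' y y' ν : 𝕜} {e : ℝ}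
    (hx : ‖x' - x‖ ≤ e) (hy : ‖y' - ν * y‖ ≤ e) : ‖x‖ - e ≤ ‖x'‖ ∧ ‖y'‖ ≤ ‖ν‖ * ‖y‖ + e := by
  constructor
  · linarith [norm_sub_norm_le x x', norm_sub_rev x x']
  · linarith [norm_le_insert' y' (ν * y), norm_mul ν y]

namespace PerturbedDiagonal

variable {𝕜 : Type*} [NormedField 𝕜] {x y : ℕ → 𝕜} {ν : 𝕜} {ε : ℕ → ℝ}

lemma eventually_norm_le_of_frequently (hν : ‖ν‖ < 1) (hε : Tendsto ε atTop (𝓝 0))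
    (hε0 : ∀ n, 0 ≤ ε n) (hx : ∀ n, ‖x (n + 1) - x n‖ ≤ ε n * (‖x n‖ + ‖y n‖))
    (hy : ∀ n, ‖y (n + 1) - ν * y n‖ ≤ ε n * (‖x n‖ + ‖y n‖)) (hxy : ∀ n, x n ≠ 0 ∨ y n ≠ 0)
    (hfreq : ∃ᶠ n in atTop, ‖y n‖ ≤ ‖x n‖) : ∀ᶠ n in atTop, x n ≠ 0 ∧ ‖y n‖ ≤ ‖x n‖ := by
  obtain ⟨N, hN⟩ := eventually_atTop.1 (hε.eventually (ge_mem_nhds (a := (1 - ‖ν‖) / 8)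
    (by linarith)))
  obtain ⟨n₀, hn₀, hle⟩ := hfreq.forall_exists_of_atTop N
  refine eventually_atTop.2 ⟨n₀, Nat.le_induction ⟨fun h0 => ?_, hle⟩ fun n hn ih => ?_⟩
  · rcases hxy n₀ with h | h
    · exact h h0
    · exact h (norm_le_zero_iff.1 (by simpa [h0] using hle))
  · obtain ⟨hxn, hyx⟩ := ih
    obtain ⟨hu', hv'⟩ := norm_bounds_of_norm_sub_le (hx n) (hy n)
    have hεn := hN n (hn₀.trans hn)
    obtain ⟨hpos, hq⟩ := div_le_mul_div_add_of_le hu' hv' (norm_nonneg ν) hν.le (hε0 n)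
      (by linarith [norm_nonneg ν]) (norm_nonneg _) hyx (norm_pos_iff.2 hxn)
    refine ⟨norm_pos_iff.1 hpos, (div_le_one hpos).1 (hq.trans ?_)⟩
    linarith [mul_le_of_le_one_right (norm_nonneg ν) ((div_le_one (norm_pos_iff.2 hxn)).2 hyx)]

lemma tendsto_div_of_eventually_norm_le (hν : ‖ν‖ < 1) (hε : Tendsto ε atTop (𝓝 0))
    (hε0 : ∀ n, 0 ≤ ε n) (hx : ∀ n, ‖x (n + 1) - x n‖ ≤ ε n * (‖x n‖ + ‖y n‖))
    (hy : ∀ n, ‖y (n + 1) - ν * y n‖ ≤ ε n * (‖x n‖ + ‖y n‖))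
    (hcone : ∀ᶠ n in atTop, x n ≠ 0 ∧ ‖y n‖ ≤ ‖x n‖) :
    Tendsto (fun n => y n / x n) atTop (𝓝 0) := by
  rw [tendsto_zero_iff_norm_tendsto_zero]
  simp only [norm_div]
  refine tendsto_zero_of_succ_le_mul_add (norm_nonneg ν) hν (fun n => by positivity)
    (by simpa using hε.const_mul 8) ?_
  filter_upwards [hcone, hε.eventually (ge_mem_nhds (show (0 : ℝ) < 1 / 4 by norm_num))]
    with n ⟨hxn, hyx⟩ hεn
  obtain ⟨hu', hv'⟩ := norm_bounds_of_norm_sub_le (hx n) (hy n)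
  exact (div_le_mul_div_add_of_le hu' hv' (norm_nonneg ν) hν.le (hε0 n) hεn (norm_nonneg _) hyx
    (norm_pos_iff.2 hxn)).2

lemma tendsto_div_of_eventually_norm_lt (hν : ‖ν‖ < 1) (hε : Tendsto ε atTop (𝓝 0))
    (hε0 : ∀ n, 0 ≤ ε n) (hx : ∀ n, ‖x (n + 1) - x n‖ ≤ ε n * (‖x n‖ + ‖y n‖))
    (hy : ∀ n, ‖y (n + 1) - ν * y n‖ ≤ ε n * (‖x n‖ + ‖y n‖))
    (hlt : ∀ᶠ n in atTop, ‖x n‖ < ‖y n‖) :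
    Tendsto (fun n => x n / y n) atTop (𝓝 0) := by
  rw [tendsto_zero_iff_norm_tendsto_zero]
  simp only [norm_div]
  have hc : (1 + ‖ν‖) / 2 < 1 := by linarith
  refine tendsto_zero_of_le_mul_succ_add (by positivity) hc (fun n => by positivity)
    (hlt.mono fun n h => (div_le_one (by linarith [norm_nonneg (x n)])).2 h.le)
    (by simpa using hε.const_mul 2) ?_
  filter_upwards [hlt, (tendsto_add_atTop_nat 1).eventually hlt,
    hε.eventually (ge_mem_nhds (a := (1 - ‖ν‖) / 4) (by linarith))] with n hn hn1 hεn
  obtain ⟨hu', hv'⟩ := norm_bounds_of_norm_sub_le (hx n) (hy n)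
  refine (div_le_mul_div_add_of_lt hu' hv' (hε0 n) (norm_nonneg _) hn (norm_nonneg _)
    ((norm_nonneg _).trans_lt hn1)).trans ?_
  gcongr
  linarith

theorem dichotomy (hν : ‖ν‖ < 1) (hε : Tendsto ε atTop (𝓝 0))
    (hε0 : ∀ n, 0 ≤ ε n) (hx : ∀ n, ‖x (n + 1) - x n‖ ≤ ε n * (‖x n‖ + ‖y n‖))
    (hy : ∀ n, ‖y (n + 1) - ν * y n‖ ≤ ε n * (‖x n‖ + ‖y n‖)) (hxy : ∀ n, x n ≠ 0 ∨ y n ≠ 0) :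
    ((∀ᶠ n in atTop, x n ≠ 0) ∧ Tendsto (fun n => y n / x n) atTop (𝓝 0)) ∨
      ((∀ᶠ n in atTop, y n ≠ 0) ∧ Tendsto (fun n => x n / y n) atTop (𝓝 0)) := by
  by_cases hlt : ∀ᶠ n in atTop, ‖x n‖ < ‖y n‖
  · exact .inr ⟨hlt.mono fun n h => norm_pos_iff.1 ((norm_nonneg _).trans_lt h),
      tendsto_div_of_eventually_norm_lt hν hε hε0 hx hy hlt⟩
  · have hfreq : ∃ᶠ n in atTop, ‖y n‖ ≤ ‖x n‖ := by
      simpa only [not_eventually, not_lt] using hlt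
    have hcone := eventually_norm_le_of_frequently hν hε hε0 hx hy hxy hfreq
    exact .inl ⟨hcone.mono fun _ h => h.1, tendsto_div_of_eventually_norm_le hν hε hε0 hx hy hcone⟩

end PerturbedDiagonal

lemma eventually_ne_zero_and_tendsto_div {α 𝕜 : Type*} [NormedField 𝕜] {l : Filter α}
    {x y : α → 𝕜} (hx : ∀ᶠ n in l, x n ≠ 0) (hyx : Tendsto (fun n => y n / x n) l (𝓝 0))
    (p q s : 𝕜) {r : 𝕜} (hr : r ≠ 0) :
    (∀ᶠ n in l, r * x n + s * y n ≠ 0) ∧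
      Tendsto (fun n => (p * x n + q * y n) / (r * x n + s * y n)) l (𝓝 (p / r)) := by
  have hnum : Tendsto (fun n => p + q * (y n / x n)) l (𝓝 p) := by
    simpa using (hyx.const_mul q).const_add p
  have hden : Tendsto (fun n => r + s * (y n / x n)) l (𝓝 r) := by
    simpa using (hyx.const_mul s).const_add r
  have hfactor (c d : 𝕜) : ∀ᶠ n in l, c * x n + d * y n = x n * (c + d * (y n / x n)) :=
    hx.mono fun n hxn => by field_simp
  constructor
  · filter_upwards [hx, hden.eventually_ne hr, hfactor r s] with n hxn hn heq
    rw [heq]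
    exact mul_ne_zero hxn hn
  · refine (hnum.div hden hr).congr' ?_
    filter_upwards [hx, hfactor p q, hfactor r s] with n hxn hp hr
    rw [Pi.div_apply, hp, hr, mul_div_mul_left _ _ hxn]

lemma norm_mul_add_mul_le {𝕜 : Type*} [NormedField 𝕜] (α β a b : 𝕜) {m : ℝ} (ha : ‖a‖ ≤ m)
    (hb : ‖b‖ ≤ m) : ‖α * a + β * b‖ ≤ (‖α‖ + ‖β‖) * m := by
  calc ‖α * a + β * b‖ ≤ ‖α‖ * ‖a‖ + ‖β‖ * ‖b‖ := by
        simpa only [norm_mul] using norm_add_le (α * a) (β * b)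
    _ ≤ ‖α‖ * m + ‖β‖ * m := by gcongr
    _ = (‖α‖ + ‖β‖) * m := by ring

lemma ne_zero_or_succ_ne_zero_of_rec {R : Type*} [Ring R] [NoZeroDivisors R] {a A B : ℕ → R}
    (hB : ∀ n, B n ≠ 0) (hrec : ∀ n, a (n + 2) = A n * a (n + 1) + B n * a n)
    (h0 : a 0 ≠ 0 ∨ a 1 ≠ 0) (n : ℕ) : a n ≠ 0 ∨ a (n + 1) ≠ 0 := by
  induction n with
  | zero => exact h0
  | succ n ih =>
    by_contra! h
    have := hrec n
    rw [h.1, h.2, mul_zero, zero_add, eq_comm, mul_eq_zero] at this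
    exact ih.elim (· (this.resolve_left (hB n))) (· h.1)

lemma norm_mul_add_mul_le_of_diagonal {𝕜 : Type*} [NormedField 𝕜] {ν : 𝕜} (hν : ‖ν‖ ≤ 1)
    (h1ν : 1 - ν ≠ 0) (α β a₀ a₁ : 𝕜) :
    ‖α * a₁ + β * a₀‖ ≤ (‖α‖ + ‖β‖) / ‖1 - ν‖ * (‖a₁ - ν * a₀‖ + ‖a₁ - a₀‖) := by
  have hpos : 0 < ‖1 - ν‖ := norm_pos_iff.2 h1ν
  have hbound (u w : 𝕜) (hw : (1 - ν) * u = w) (hle : ‖w‖ ≤ ‖a₁ - ν * a₀‖ + ‖a₁ - a₀‖) :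
      ‖u‖ ≤ (‖a₁ - ν * a₀‖ + ‖a₁ - a₀‖) / ‖1 - ν‖ := by
    rwa [le_div_iff₀ hpos, mul_comm, ← norm_mul, hw]
  have h₁ : ‖(a₁ - ν * a₀) - ν * (a₁ - a₀)‖ ≤ ‖a₁ - ν * a₀‖ + ‖a₁ - a₀‖ :=
    calc _ ≤ ‖a₁ - ν * a₀‖ + ‖ν‖ * ‖a₁ - a₀‖ := by
          simpa only [norm_mul] using norm_sub_le (a₁ - ν * a₀) (ν * (a₁ - a₀))
      _ ≤ ‖a₁ - ν * a₀‖ + ‖a₁ - a₀‖ := by gcongr; exact mul_le_of_le_one_left (norm_nonneg _) hν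
  rw [div_mul_eq_mul_div, mul_div_assoc]
  exact norm_mul_add_mul_le α β a₁ a₀ (hbound a₁ _ (by ring) h₁)
    (hbound a₀ _ (by ring) (norm_sub_le (a₁ - ν * a₀) (a₁ - a₀)))

theorem poincare_two_term {𝕜 : Type*} [NormedField 𝕜] {a A B : ℕ → 𝕜} {ν : 𝕜} (hν : ‖ν‖ < 1)
    (hA : Tendsto A atTop (𝓝 (1 + ν))) (hB : Tendsto B atTop (𝓝 (-ν)))
    (hrec : ∀ n, a (n + 2) = A n * a (n + 1) + B n * a n) (ha : ∀ n, a n ≠ 0 ∨ a (n + 1) ≠ 0) :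
    (∀ᶠ n in atTop, a n ≠ 0) ∧
      (Tendsto (fun n => a (n + 1) / a n) atTop (𝓝 1) ∨
        Tendsto (fun n => a (n + 1) / a n) atTop (𝓝 ν)) := by
  set x : ℕ → 𝕜 := fun n => a (n + 1) - ν * a n
  set y : ℕ → 𝕜 := fun n => a (n + 1) - a n
  have h1ν : 1 - ν ≠ 0 := sub_ne_zero.2 fun h => by simp [← h] at hν
  have ha_eq (n : ℕ) : a n = (x n - y n) / (1 - ν) := by
    rw [eq_div_iff h1ν]; ring
  have hratio (n : ℕ) : a (n + 1) / a n = (x n - ν * y n) / (x n - y n) := by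
    have : a (n + 1) = (x n - ν * y n) / (1 - ν) := by rw [eq_div_iff h1ν]; ring
    rw [this, ha_eq, div_div_div_cancel_right₀ h1ν]
  -- `x` and `y` absorb the same defect: the residual of the limiting recurrence
  -- `a (n + 2) = (1 + ν) a (n + 1) - ν a n`.
  set D : ℕ → 𝕜 := fun n => (A n - (1 + ν)) * a (n + 1) + (B n + ν) * a n
  have hxD (n : ℕ) : x (n + 1) - x n = D n := by simp only [x, D, hrec]; ring
  have hyD (n : ℕ) : y (n + 1) - ν * y n = D n := by simp only [y, D, hrec]; ring
  set ε : ℕ → ℝ := fun n => (‖A n - (1 + ν)‖ + ‖B n + ν‖) / ‖1 - ν‖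
  have hε : Tendsto ε atTop (𝓝 0) := by
    have hA0 := tendsto_sub_nhds_zero_iff.2 hA
    have hB0 : Tendsto (fun n => B n + ν) atTop (𝓝 0) := by
      simpa using hB.add_const ν
    simpa using ((hA0.norm.add hB0.norm).div_const ‖1 - ν‖)
  have hDle (n : ℕ) : ‖D n‖ ≤ ε n * (‖x n‖ + ‖y n‖) :=
    norm_mul_add_mul_le_of_diagonal hν.le h1ν _ _ (a n) (a (n + 1))
  have hxy (n : ℕ) : x n ≠ 0 ∨ y n ≠ 0 := by
    by_contra! h
    have h0 : a n = 0 := by rw [ha_eq, h.1, h.2, sub_zero, zero_div]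
    have h1 : a (n + 1) = 0 := by linear_combination h.2 + h0
    exact (ha n).elim (· h0) (· h1)
  have hdich := PerturbedDiagonal.dichotomy hν hε (fun n => by positivity)
    (fun n => (hxD n).symm ▸ hDle n) (fun n => (hyD n).symm ▸ hDle n) hxy
  have hne_iff (n : ℕ) : a n ≠ 0 ↔ x n - y n ≠ 0 := by simp [ha_eq, h1ν]
  simp only [hne_iff, hratio]
  rcases hdich with ⟨hx, hyx⟩ | ⟨hy, hxy⟩
  · obtain ⟨hne, hlim⟩ := eventually_ne_zero_and_tendsto_div hx hyx 1 (-ν) (-1) one_ne_zero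
    refine ⟨hne.mono fun n h => by convert h using 1; ring, .inl ?_⟩
    convert hlim using 2 <;> ring
  · obtain ⟨hne, hlim⟩ :=
      eventually_ne_zero_and_tendsto_div hy hxy (-ν) 1 1 (neg_ne_zero.2 one_ne_zero)
    refine ⟨hne.mono fun n h => by convert h using 1; ring, .inr ?_⟩
    convert hlim using 2 <;> ring

lemma tendsto_quadratic_div_quadratic {𝕜 : Type*} [RCLike 𝕜] (a b c d e f : 𝕜) (hd : d ≠ 0) :
    Tendsto (fun n : ℕ => (a * n ^ 2 + b * n + c) / (d * n ^ 2 + e * n + f)) atTop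
      (𝓝 (a / d)) := by
  have hinv := tendsto_inv_atTop_nhds_zero_nat (𝕜 := 𝕜)
  have hlim (a b c : 𝕜) :
      Tendsto (fun n : ℕ => a + b * (n : 𝕜)⁻¹ + c * (n : 𝕜)⁻¹ ^ 2) atTop (𝓝 a) := by
    simpa using ((hinv.const_mul b).const_add a).add ((hinv.pow 2).const_mul c)
  refine ((hlim a b c).div (hlim d e f) hd).congr' ?_
  filter_upwards [eventually_ne_atTop 0] with n hn
  have hn' : (n : 𝕜) ≠ 0 := Nat.cast_ne_zero.2 hn
  rw [Pi.div_apply, ← mul_div_mul_right _ _ (pow_ne_zero 2 hn')]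
  congr 1 <;> field_simp

lemma tendsto_A3 (lam : ℂ) : Tendsto (fun n : ℕ => A3 lam n) atTop (𝓝 (3 / 2)) := by
  convert tendsto_quadratic_div_quadratic 12 (8 * lam + 56) (lam ^ 2 + 20 * lam + 56) 8 52 72
    (by norm_num) using 2 with n
  · simp only [A3, Int.cast_natCast]; ring
  · norm_num

lemma tendsto_B3 (lam : ℂ) : Tendsto (fun n : ℕ => B3 lam n) atTop (𝓝 (-(1 / 2))) := by
  convert tendsto_quadratic_div_quadratic (-4) (-(4 * lam + 12)) (-(lam ^ 2 + 6 * lam + 8)) 8 52 72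
    (by norm_num) using 2 with n
  · simp only [B3, Int.cast_natCast]; ring
  · norm_num

lemma B3_ne_zero {lam : ℂ} (hre : 0 ≤ lam.re) (n : ℕ) : B3 lam n ≠ 0 := by
  have hpos (k : ℝ) (hk : 0 < k) : 2 * (n : ℂ) + lam + k ≠ 0 := fun h => by
    have := congrArg Complex.re h
    simp only [Complex.add_re, Complex.mul_re, Complex.re_ofNat, Complex.natCast_re,
      Complex.im_ofNat, Complex.natCast_im, mul_zero, sub_zero, Complex.ofReal_re,
      Complex.zero_re] at this
    linarith [(n.cast_nonneg : (0 : ℝ) ≤ n)]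
  have hden : (8 * (n : ℂ) ^ 2 + 52 * n + 72) ≠ 0 := by
    exact_mod_cast (by positivity : 8 * n ^ 2 + 52 * n + 72 ≠ 0)
  have hfac : 4 * (n : ℂ) ^ 2 + (4 * lam + 12) * n + lam ^ 2 + 6 * lam + 8
      = (2 * n + lam + 2) * (2 * n + lam + 4) := by ring
  simp only [B3, Int.cast_natCast, hfac]
  exact div_ne_zero (neg_ne_zero.2 (mul_ne_zero (hpos 2 two_pos) (hpos 4 four_pos))) hden

theorem ratio_dichotomy_d3_general (lam : ℂ) (hre : 0 ≤ lam.re) (a : ℕ → ℂ)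
    (ha0 : a 0 = 1)
    (harec : ∀ n : ℕ, a (n + 2) = A3 lam n * a (n + 1) + B3 lam n * a n) :
    (∃ N : ℕ, ∀ n ≥ N, a n ≠ 0) ∧
      (Filter.Tendsto (fun n => a (n + 1) / a n) Filter.atTop (nhds 1) ∨
        Filter.Tendsto (fun n => a (n + 1) / a n) Filter.atTop (nhds (1 / 2))) := by
  have ha : ∀ n, a n ≠ 0 ∨ a (n + 1) ≠ 0 :=
    ne_zero_or_succ_ne_zero_of_rec (B3_ne_zero hre) harec (.inl (ha0 ▸ one_ne_zero))
  have hA : Tendsto (fun n : ℕ => A3 lam n) atTop (𝓝 (1 + 1 / 2)) := by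
    convert tendsto_A3 lam using 2; norm_num
  have hB : Tendsto (fun n : ℕ => B3 lam n) atTop (𝓝 (-(1 / 2))) := tendsto_B3 lam
  obtain ⟨hne, hlim⟩ := poincare_two_term (by norm_num) hA hB harec ha
  exact ⟨eventually_atTop.1 hne, hlim⟩

/-- Poincaré dichotomy in the `d = 3` case: the `aₙ(λ)` are eventually nonzero and the
ratios `aₙ₊₁/aₙ` converge either to `1` or to `1/2`. -/
theorem ratio_dichotomy_d3 (lam : ℂ) (hre : 0 ≤ lam.re) (a : ℕ → ℂ)
    (ha0 : a 0 = 1) (ha1 : a 1 = A3 lam (-1))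
    (harec : ∀ n : ℕ, a (n + 2) = A3 lam n * a (n + 1) + B3 lam n * a n) :
    (∃ N : ℕ, ∀ n ≥ N, a n ≠ 0) ∧
      (Filter.Tendsto (fun n => a (n + 1) / a n) Filter.atTop (nhds 1) ∨
        Filter.Tendsto (fun n => a (n + 1) / a n) Filter.atTop (nhds (1 / 2))) :=
  ratio_dichotomy_d3_general lam hre a ha0 harec
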